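/- arXiv:1705.10933 — 2 statements merged into one kernel-verified Lean document; each statement's English description precedes it below -/
import Mathlib

section
/- For every e ≥ 1, σ_∞(2^e) has at least l(e) distinct prime factors, where l(e) is the number of 1's in the binary expansion of e. -/
/-- The sum of infinitary divisors of `n`: for `n = ∏ p ^ e_p`, it equals
`∏_p ∏_{j : bit j of e_p is 1} (p ^ 2 ^ j + 1)`. -/
def infsigma (n : ℕ) : ℕ :=
  n.factorization.prod fun p e =>
    ∏ j ∈ Finset.range e, if e.testBit j then p ^ 2 ^ j + 1 else 1

/-!
`σ_∞(2^e)` is the product of the Fermat numbers `F_j = 2^(2^j) + 1` over the bits `j` of `e`.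
Distinct Fermat numbers are coprime and each exceeds `1`, so the least prime factors of these
`l(e)` Fermat numbers are pairwise distinct prime factors of `σ_∞(2^e)`.
-/

open Finset

theorem infsigma_prime_pow {p : ℕ} (hp : p.Prime) (e : ℕ) :
    infsigma (p ^ e) = ∏ j ∈ range e with e.testBit j, (p ^ 2 ^ j + 1) := by
  rw [infsigma, hp.factorization_pow, Finsupp.prod_single_index (by simp), prod_filter]

theorem infsigma_two_pow (e : ℕ) :
    infsigma (2 ^ e) = ∏ j ∈ range e with e.testBit j, j.fermatNumber :=
  infsigma_prime_pow Nat.prime_two e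

namespace Nat

theorem sum_digits_two_eq_card_testBit {k n : ℕ} (hn : n < 2 ^ k) :
    (digits 2 n).sum = #{j ∈ range k | n.testBit j} := by
  induction k generalizing n with
  | zero => simp [show n = 0 by omega]
  | succ k ih =>
    rcases eq_zero_or_pos n with rfl | hpos
    · simp
    have hhalf : n / 2 < 2 ^ k := by omega
    rw [digits_def' (by norm_num) hpos, List.sum_cons, ih hhalf, card_filter, card_filter,
      sum_range_succ']
    simp only [testBit_succ, testBit_zero]
    rcases mod_two_eq_zero_or_one n with h | h <;> simp [h, add_comm]

theorem card_le_card_primeFactors_prod {ι : Type*} (s : Finset ι) {f : ι → ℕ}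
    (hf₀ : ∀ i ∈ s, f i ≠ 0) (hf₁ : ∀ i ∈ s, f i ≠ 1)
    (hcop : (s : Set ι).Pairwise fun i j ↦ Coprime (f i) (f j)) :
    #s ≤ #(∏ i ∈ s, f i).primeFactors := by
  refine card_le_card_of_injOn (fun i ↦ (f i).minFac) (fun i hi ↦ ?_) fun i hi j hj hij ↦ ?_
  · exact mem_primeFactors.2 ⟨minFac_prime (hf₁ i hi),
      (minFac_dvd _).trans (dvd_prod_of_mem f hi), prod_ne_zero_iff.2 hf₀⟩
  · by_contra hne
    have hdvd_j : (f i).minFac ∣ f j := by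
      rw [show (f i).minFac = (f j).minFac from hij]
      exact minFac_dvd _
    exact (minFac_prime (hf₁ i hi)).ne_one
      (eq_one_of_dvd_coprimes (hcop hi hj hne) (minFac_dvd _) hdvd_j)

end Nat

theorem infsigma_two_pow_omega_general (e : ℕ) :
    (Nat.digits 2 e).sum ≤ (infsigma (2 ^ e)).primeFactors.card := by
  rw [Nat.sum_digits_two_eq_card_testBit e.lt_two_pow_self, infsigma_two_pow]
  exact Nat.card_le_card_primeFactors_prod _ (fun j _ ↦ (Nat.odd_fermatNumber j).pos.ne')
    (fun j _ ↦ j.fermatNumber_ne_one) (Nat.pairwise_coprime_fermatNumber.set_pairwise _)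

theorem infsigma_two_pow_omega (e : ℕ) (he : 1 ≤ e) :
    (Nat.digits 2 e).sum ≤ (infsigma (2 ^ e)).primeFactors.card :=
  infsigma_two_pow_omega_general e
end

section
/- For every l ≥ 0, the Fermat number 2^{2^l} + 1 is not a proper prime power; that is, there is no prime q and integer f > 1 with 2^{2^l} + 1 = q^f. -/
/-!
If `f` is odd, `q ^ f - 1 = (q - 1) * (1 + q + ⋯ + q ^ (f - 1))` and the second factor is odd
(as `q` is) and larger than `1`, so `q ^ f - 1` is not a power of two. If `f = 2 * k`, then
`(q ^ k - 1) * (q ^ k + 1)` is a power of two, so both factors are powers of two differing by `2`;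
this forces `q ^ k = 3` and `2 ^ 2 ^ l = 8`, which is impossible.
-/

open Finset

namespace Nat

theorem eq_one_of_two_pow_add_two_eq_two_pow {a b : ℕ} (h : 2 ^ a + 2 = 2 ^ b) : a = 1 := by
  have ha := Nat.one_le_two_pow (n := a)
  rcases a with _ | _ | a <;> rcases b with _ | _ | b <;>
    simp only [pow_zero, pow_succ] at h ha ⊢ <;> omega

theorem eq_three_of_sq_eq_two_pow_add_one {x m : ℕ} (h : x ^ 2 = 2 ^ m + 1) :
    x = 3 ∧ m = 3 := by
  obtain ⟨y, rfl⟩ : ∃ y, x = y + 1 :=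
    exists_eq_add_one.mpr (by nlinarith [Nat.one_le_two_pow (n := m)])
  have hfac : y * (y + 2) = 2 ^ m := by nlinarith
  obtain ⟨a, -, rfl⟩ := (dvd_prime_pow prime_two).mp (Dvd.intro _ hfac)
  obtain ⟨b, -, hb⟩ := (dvd_prime_pow prime_two).mp (Dvd.intro_left _ hfac)
  obtain rfl := eq_one_of_two_pow_add_two_eq_two_pow hb
  exact ⟨rfl, Nat.pow_right_injective le_rfl (by simpa using hfac.symm)⟩

theorem odd_geom_sum {x n : ℕ} (hx : Odd x) (hn : Odd n) : Odd (∑ i ∈ range n, x ^ i) := by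
  rw [odd_sum_iff_odd_card_odd, filter_true_of_mem fun i _ ↦ hx.pow, card_range]
  exact hn

theorem pow_ne_two_pow_add_one_of_odd {x n m : ℕ} (hn : Odd n) (hn1 : 1 < n) (hm : m ≠ 0) :
    x ^ n ≠ 2 ^ m + 1 := by
  intro h
  have hx : Odd x :=
    (odd_pow_iff (by omega)).mp (h ▸ (even_pow.mpr ⟨even_two, hm⟩).add_one)
  obtain ⟨y, rfl⟩ : ∃ y, x = y + 1 := exists_eq_add_one.mpr hx.pos
  have hSy := geom_sum_mul_add y n
  rw [h, add_right_cancel_iff] at hSy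
  set S := ∑ i ∈ range n, (y + 1) ^ i
  have hS1 : S = 1 :=
    Coprime.eq_one_of_dvd ((odd_geom_sum hx hn).coprime_two_right.pow_right m) (Dvd.intro y hSy)
  have hS2 : 2 ≤ S := calc
    2 ≤ ∑ i ∈ range 2, (y + 1) ^ i := by
      simp only [sum_range_succ, sum_range_zero, pow_zero, pow_one]; omega
    _ ≤ S := sum_le_sum_of_subset (range_subset_range.mpr hn1)
  omega

end Nat

theorem fermat_number_not_proper_prime_pow (l : ℕ) :
    ¬ ∃ (q f : ℕ), q.Prime ∧ 1 < f ∧ 2 ^ 2 ^ l + 1 = q ^ f := by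
  rintro ⟨q, f, -, hf, h⟩
  rcases Nat.even_or_odd f with ⟨k, rfl⟩ | hodd
  · have hl : 2 ^ l = 3 :=
      (Nat.eq_three_of_sq_eq_two_pow_add_one (x := q ^ k) (by rw [h, ← pow_mul, mul_two])).2
    rcases l with _ | l <;> simp only [pow_zero, pow_succ] at hl <;> omega
  · exact Nat.pow_ne_two_pow_add_one_of_odd hodd hf (by positivity) h.symm
end
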